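/- arXiv:1507.04569 — 3 statements merged into one kernel-verified Lean document; each statement's English description precedes it below -/
import Mathlib

section
/- Let H be a (finite) simple graph and let G = 2H be the signed graph obtained from H by replacing every edge of H by a pair of parallel edges, one positive and one negative. Then the signed chromatic number of G satisfies χ±(G) = 2·χ(H) − 1, where χ(H) is the ordinary chromatic number of H. -/
open scoped Classical

/-- A signed graph: a finite loopless multigraph together with a sign `+1` or `-1`
on each edge. -/
structure SignedGraph where
  /-- vertex type -/
  V : Type
  /-- edge type -/
  E : Type
  fintypeV : Fintype V
  fintypeE : Fintype E
  decEqV : DecidableEq V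
  /-- the two (distinct) endpoints of an edge, as an unordered pair -/
  ends : E → Sym2 V
  loopless : ∀ e : E, ¬ (ends e).IsDiag
  /-- the sign of an edge -/
  sign : E → ℤ
  sign_unit : ∀ e : E, sign e = 1 ∨ sign e = -1

attribute [instance] SignedGraph.fintypeV SignedGraph.fintypeE SignedGraph.decEqV

namespace SignedGraph

variable (G : SignedGraph)

/-- The degree of a vertex: the number of edges incident with it. -/
noncomputable def degree (v : G.V) : ℕ :=
  (Finset.univ.filter (fun e : G.E => v ∈ G.ends e)).card

/-- The maximum degree `Δ(G)`. -/
noncomputable def maxDegree : ℕ :=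
  Finset.univ.sup (fun v : G.V => G.degree v)

/-- Two vertices are adjacent if some edge joins them. -/
def Adj (v w : G.V) : Prop := ∃ e : G.E, G.ends e = s(v, w)

/-- The simple graph of the adjacency relation (underlying simplification). -/
def adjGraph : SimpleGraph G.V where
  Adj := G.Adj
  symm := ⟨fun _ _ h => by obtain ⟨e, he⟩ := h; exact ⟨e, he.trans (Sym2.eq_swap)⟩⟩
  loopless := ⟨fun v h => by
    obtain ⟨e, he⟩ := h
    exact G.loopless e (by rw [he]; exact Sym2.mk_isDiag_iff.mpr rfl)⟩

/-- A signed graph is connected if its underlying graph is connected. -/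
def Connected : Prop := G.adjGraph.Connected

/-- The underlying graph is simple: no two parallel edges. -/
def SimpleUnderlying : Prop := ∀ e f : G.E, G.ends e = G.ends f → e = f

/-- A (proper) coloring of a signed graph. -/
def IsColoring (φ : G.V → ℤ) : Prop :=
  ∀ (e : G.E) (v w : G.V), G.ends e = s(v, w) → φ v ≠ G.sign e * φ w

/-- The color set `Z_k`:  `Z_{2h} = {±1, …, ±h}` and `Z_{2h+1} = Z_{2h} ∪ {0}`. -/
def ZSet (k : ℕ) : Set ℤ := {x : ℤ | 2 * |x| ≤ (k : ℤ) ∧ (x = 0 → Odd k)}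

/-- The signed chromatic number `χ±(G)`: the least `k` such that `G` admits a
coloring with image contained in `Z_k`. -/
noncomputable def signedChromaticNumber : ℕ :=
  sInf {k : ℕ | ∃ φ : G.V → ℤ, G.IsColoring φ ∧ ∀ v : G.V, φ v ∈ ZSet k}

/-- `G` admits a coloring from the lists `L`. -/
def ListColorable (L : G.V → Finset ℤ) : Prop :=
  ∃ φ : G.V → ℤ, G.IsColoring φ ∧ ∀ v : G.V, φ v ∈ L v

/-- The signed choice number `χℓ±(G)`. -/
noncomputable def signedChoiceNumber : ℕ :=
  sInf {k : ℕ | ∀ L : G.V → Finset ℤ, (∀ v : G.V, (L v).card = k) → G.ListColorable L}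

/-- `G` is degree choosable. -/
def DegreeChoosable : Prop :=
  ∀ L : G.V → Finset ℤ, (∀ v : G.V, (L v).card = G.degree v) → G.ListColorable L

/-- `(G, L)` is an uncolorable pair. -/
def UncolorablePair (L : G.V → Finset ℤ) : Prop :=
  G.Connected ∧ (∀ v : G.V, G.degree v ≤ (L v).card) ∧ ¬ G.ListColorable L

/-- Walks in a signed multigraph. -/
inductive Walk (G : SignedGraph) : G.V → G.V → Type
  | nil (v : G.V) : Walk G v v
  | cons {v w u : G.V} (e : G.E) (he : G.ends e = s(v, w)) (p : Walk G w u) : Walk G v u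

namespace Walk

variable {G}

/-- The list of edges of a walk. -/
def edges : ∀ {v w : G.V}, Walk G v w → List G.E
  | _, _, .nil _ => []
  | _, _, .cons e _ p => e :: edges p

/-- The list of vertices of a walk. -/
def support : ∀ {v w : G.V}, Walk G v w → List G.V
  | _, _, .nil v => [v]
  | v, _, .cons _ _ p => v :: support p

/-- The length of a walk. -/
def length {v w : G.V} (p : Walk G v w) : ℕ := p.edges.length

/-- The sign product of a walk. -/
def signProd {v w : G.V} (p : Walk G v w) : ℤ := (p.edges.map G.sign).prod

/-- A cycle: a nonempty closed walk with no repeated edges and no repeated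
vertices (except the first = last). -/
def IsCycle {v : G.V} (p : Walk G v v) : Prop :=
  p.edges ≠ [] ∧ p.edges.Nodup ∧ p.support.tail.Nodup

end Walk

/-- A signed graph is balanced if every cycle has positive sign product. -/
def Balanced : Prop := ∀ (v : G.V) (p : Walk G v v), p.IsCycle → p.signProd = 1

/-- A signed graph is antibalanced if every even cycle has positive sign product
and every odd cycle has negative sign product. -/
def Antibalanced : Prop :=
  ∀ (v : G.V) (p : Walk G v v), p.IsCycle → p.signProd = (-1) ^ p.length

/-- `G` is balanced with parts `X`, `Y`: the vertex set is the disjoint union of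
`X` and `Y` and an edge is negative iff it joins `X` to `Y`. -/
def BalancedWithParts (X Y : Set G.V) : Prop :=
  X ∪ Y = Set.univ ∧ Disjoint X Y ∧
  ∀ (e : G.E) (v w : G.V), G.ends e = s(v, w) →
    (G.sign e = -1 ↔ (v ∈ X ∧ w ∈ Y) ∨ (v ∈ Y ∧ w ∈ X))

/-- The underlying graph is a complete (simple) graph. -/
def IsCompleteGraph : Prop :=
  G.SimpleUnderlying ∧ ∀ v w : G.V, v ≠ w → G.Adj v w

/-- `G` is a balanced complete graph. -/
def IsBalancedComplete : Prop := G.IsCompleteGraph ∧ G.Balanced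

/-- The underlying graph is a cycle. -/
def IsCycleGraph : Prop :=
  G.Connected ∧ G.SimpleUnderlying ∧ ∀ v : G.V, G.degree v = 2

/-- `G` is a balanced odd cycle. -/
def IsBalancedOddCycle : Prop :=
  G.IsCycleGraph ∧ G.Balanced ∧ Odd (Fintype.card G.V)

/-- `G` is an unbalanced even cycle. -/
def IsUnbalancedEvenCycle : Prop :=
  G.IsCycleGraph ∧ ¬ G.Balanced ∧ Even (Fintype.card G.V)

/-- Every edge of `G` comes in a pair of parallel edges of opposite sign, and
any two vertices are joined by at most two edges. -/
def Doubled : Prop :=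
  ∀ (e : G.E) (v w : G.V), G.ends e = s(v, w) →
    ∃ f : G.E, f ≠ e ∧ G.ends f = s(v, w) ∧ G.sign f = - G.sign e ∧
      ∀ g : G.E, G.ends g = s(v, w) → g = e ∨ g = f

/-- `G` is a `2Kₙ` for some `n ≥ 2`. -/
def IsDoubleComplete : Prop :=
  2 ≤ Fintype.card G.V ∧ G.Doubled ∧ ∀ v w : G.V, v ≠ w → G.Adj v w

/-- `G` is a `2Cₙ` for some odd `n ≥ 3`. -/
def IsDoubleOddCycle : Prop :=
  G.Connected ∧ G.Doubled ∧ (∀ v : G.V, G.degree v = 4) ∧ Odd (Fintype.card G.V)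

/-- A brick. -/
def IsBrick : Prop :=
  G.IsBalancedComplete ∨ G.IsBalancedOddCycle ∨ G.IsUnbalancedEvenCycle ∨
    G.IsDoubleComplete ∨ G.IsDoubleOddCycle

/-- A subgraph of a signed graph. -/
structure Subgraph (G : SignedGraph) where
  verts : Set G.V
  edges : Set G.E
  ends_mem : ∀ e ∈ edges, ∀ v ∈ G.ends e, v ∈ verts

namespace Subgraph

variable {G}

/-- A subgraph, regarded as a signed graph in its own right. -/
noncomputable def toSG (H : G.Subgraph) : SignedGraph where
  V := H.verts
  E := H.edges
  fintypeV := Fintype.ofFinite _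
  fintypeE := Fintype.ofFinite _
  decEqV := inferInstance
  ends := fun e =>
    s((⟨(G.ends e.1).out.1, H.ends_mem e.1 e.2 _ (Sym2.out_fst_mem _)⟩ : H.verts),
      (⟨(G.ends e.1).out.2, H.ends_mem e.1 e.2 _ (Sym2.out_snd_mem _)⟩ : H.verts))
  loopless := fun e h => by
    rw [Sym2.mk_isDiag_iff, Subtype.mk.injEq] at h
    exact G.loopless e.1 (by
      rw [← (G.ends e.1).out_eq]
      exact Sym2.mk_isDiag_iff.mpr h)
  sign := fun e => G.sign e.1
  sign_unit := fun e => G.sign_unit e.1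

/-- Delete a vertex (and all incident edges) from a subgraph. -/
def delete (H : G.Subgraph) (v : G.V) : G.Subgraph where
  verts := H.verts \ {v}
  edges := {e ∈ H.edges | v ∉ G.ends e}
  ends_mem := fun e he w hw =>
    ⟨H.ends_mem e he.1 w hw, fun h => he.2 (by rwa [Set.mem_singleton_iff.mp h] at hw)⟩

/-- Subgraph inclusion. -/
def Le (H K : G.Subgraph) : Prop := H.verts ⊆ K.verts ∧ H.edges ⊆ K.edges

/-- `v` is a separating (cut) vertex of the subgraph `H`. -/
def IsCutVertex (H : G.Subgraph) (v : G.V) : Prop :=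
  v ∈ H.verts ∧ (H.delete v).verts.Nonempty ∧ ¬ (H.delete v).toSG.Connected

/-- `B` is a block of `G`: a maximal connected subgraph without a cut vertex. -/
def IsBlock (B : G.Subgraph) : Prop :=
  B.toSG.Connected ∧ (∀ v : G.V, ¬ B.IsCutVertex v) ∧
  ∀ B' : G.Subgraph, B.Le B' → B'.toSG.Connected →
    (∀ v : G.V, ¬ B'.IsCutVertex v) → B'.Le B

/-- The degree of a vertex in a subgraph. -/
noncomputable def degree (H : G.Subgraph) (v : G.V) : ℕ :=
  (Finset.univ.filter (fun e : G.E => e ∈ H.edges ∧ v ∈ G.ends e)).card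

/-- The minimum degree of a subgraph. -/
noncomputable def minDegree (H : G.Subgraph) : ℕ :=
  sInf {d : ℕ | ∃ v ∈ H.verts, H.degree v = d}

/-- The subgraph admits a coloring from the lists `L`. -/
def ListColorable (H : G.Subgraph) (L : G.V → Finset ℤ) : Prop :=
  ∃ φ : G.V → ℤ,
    (∀ e ∈ H.edges, ∀ v w : G.V, G.ends e = s(v, w) → φ v ≠ G.sign e * φ w) ∧
    ∀ v ∈ H.verts, φ v ∈ L v

/-- A proper subgraph. -/
def IsProper (H : G.Subgraph) : Prop :=
  H.verts ≠ Set.univ ∨ H.edges ≠ Set.univ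

end Subgraph

/-- The subgraph consisting of all of `G`. -/
def topSubgraph : G.Subgraph := ⟨Set.univ, Set.univ, fun _ _ _ _ => trivial⟩

/-- A separating (cut) vertex of `G`. -/
def IsCutVertex (v : G.V) : Prop := G.topSubgraph.IsCutVertex v

/-- The coloring number `col(G)`: one plus the maximum over all (nonempty)
subgraphs of the minimum degree. -/
noncomputable def coloringNumber : ℕ :=
  1 + sSup {d : ℕ | ∃ H : G.Subgraph, H.verts.Nonempty ∧ H.minDegree = d}

/-- The subgraph induced by a vertex set `X`. -/
def induced (X : Set G.V) : G.Subgraph where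
  verts := X
  edges := {e : G.E | ∀ v ∈ G.ends e, v ∈ X}
  ends_mem := fun e he v hv => he v hv

/-- `G` is `L`-critical. -/
def LCritical (L : G.V → Finset ℤ) : Prop :=
  ¬ G.ListColorable L ∧ ∀ H : G.Subgraph, H.IsProper → H.ListColorable L

/-- `G` is `k`-critical (with respect to the signed chromatic number). -/
def KCritical (k : ℕ) : Prop :=
  G.signedChromaticNumber = k ∧
  ∀ H : G.Subgraph, H.IsProper → H.toSG.signedChromaticNumber ≤ k - 1

/-- `G` is `k`-list-critical. -/
def KListCritical (k : ℕ) : Prop :=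
  ∃ L : G.V → Finset ℤ, (∀ v : G.V, (L v).card = k - 1) ∧ G.LCritical L

/-- The signed graph `2H` obtained from a simple graph `H` by replacing every
edge by a pair of parallel edges, one positive and one negative. -/
noncomputable def double {W : Type} [Fintype W] [DecidableEq W] (H : SimpleGraph W) :
    SignedGraph where
  V := W
  E := H.edgeSet × Bool
  fintypeV := inferInstance
  fintypeE := Fintype.ofFinite _
  decEqV := inferInstance
  ends := fun e => e.1.1
  loopless := fun e => H.not_isDiag_of_mem_edgeSet e.1.2
  sign := fun e => if e.2 then 1 else -1
  sign_unit := fun e => by by_cases h : e.2 <;> simp [h]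

end SignedGraph

/-!
A coloring of `2H` must avoid both `φ v = φ w` and `φ v = -φ w` on every edge `vw` of `H`, so it
is exactly a map `φ` for which `v ↦ |φ v|` is a proper coloring of `H`. The absolute values
occurring in `Z_k` are `0, …, h` for `k = 2h + 1` and `1, …, h` for `k = 2h`, which is
`(k + 1) / 2` values; hence a `Z_k`-coloring of `2H` gives `χ(H) ≤ (k + 1) / 2`. Conversely a
proper coloring of `H` with colors `0, …, n - 1` is already a `Z_{2n-1}`-coloring of `2H`.
-/

namespace SignedGraph

theorem double_isColoring_iff {W : Type} [Fintype W] [DecidableEq W] (H : SimpleGraph W)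
    (φ : W → ℤ) : (double H).IsColoring φ ↔ ∀ v w, H.Adj v w → |φ v| ≠ |φ w| := by
  constructor
  · intro hφ v w hvw habs
    rcases abs_eq_abs.mp habs with h | h
    · exact hφ ⟨⟨s(v, w), hvw⟩, true⟩ v w rfl (by simpa [double] using h)
    · exact hφ ⟨⟨s(v, w), hvw⟩, false⟩ v w rfl (by simpa [double] using h)
  · rintro hφ ⟨⟨e, he⟩, b⟩ v w (rfl : e = s(v, w)) heq
    apply hφ v w he
    cases b <;> simp [heq, double]

theorem natAbs_bounds_of_mem_ZSet {k : ℕ} {x : ℤ} (hx : x ∈ ZSet k) :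
    1 - k % 2 ≤ x.natAbs ∧ x.natAbs + k % 2 ≤ (k + 1) / 2 := by
  obtain ⟨hbound, hzero⟩ := hx
  have hbound' : 2 * x.natAbs ≤ k := by
    rw [Int.abs_eq_natAbs] at hbound
    exact_mod_cast hbound
  have hodd : x.natAbs = 0 → k % 2 = 1 := fun h =>
    Nat.odd_iff.mp (hzero (Int.natAbs_eq_zero.mp h))
  omega

theorem natCast_mem_ZSet {m n : ℕ} (hm : m < n) : (m : ℤ) ∈ ZSet (2 * n - 1) :=
  ⟨by rw [abs_of_nonneg (Int.natCast_nonneg m)]; omega,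
    fun _ => Nat.odd_iff.mpr (by omega)⟩

theorem exists_isColoring_double_of_colorable {W : Type} [Fintype W] [DecidableEq W]
    {H : SimpleGraph W} {n : ℕ} (hH : H.Colorable n) :
    ∃ φ : W → ℤ, (double H).IsColoring φ ∧ ∀ v, φ v ∈ ZSet (2 * n - 1) := by
  obtain ⟨C⟩ := hH
  refine ⟨fun v => (C v : ℕ), (double_isColoring_iff H _).mpr fun v w hvw habs => ?_,
    fun v => natCast_mem_ZSet (C v).isLt⟩
  simp only [Nat.abs_cast, Nat.cast_inj] at habs
  exact C.valid hvw (Fin.ext habs)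

theorem colorable_of_isColoring_double {W : Type} [Fintype W] [DecidableEq W]
    {H : SimpleGraph W} {k : ℕ} {φ : W → ℤ} (hφ : (double H).IsColoring φ)
    (hk : ∀ v, φ v ∈ ZSet k) : H.Colorable ((k + 1) / 2) := by
  have hbounds := fun v => natAbs_bounds_of_mem_ZSet (hk v)
  have hadj := (double_isColoring_iff H φ).mp hφ
  -- shift the absolute values `1, …, k / 2` down to `0` when `0 ∉ Z_k`
  let C : H.Coloring ℕ := SimpleGraph.Coloring.mk (fun v => (φ v).natAbs - (1 - k % 2))
    fun {v w} hvw heq => hadj v w hvw <| by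
      rw [Int.abs_eq_natAbs, Int.abs_eq_natAbs]
      have := hbounds v
      have := hbounds w
      omega
  refine (H.colorable_iff_exists_bdd_nat_coloring _).mpr ⟨C, fun v => ?_⟩
  have := hbounds v
  show (φ v).natAbs - (1 - k % 2) < (k + 1) / 2
  omega

end SignedGraph

/-- For a finite simple graph `H`, the signed graph `2H`
satisfies `χ±(2H) = 2 χ(H) − 1`. -/
theorem signedChromaticNumber_double {W : Type} [Fintype W] [DecidableEq W]
    (H : SimpleGraph W) :
    (SignedGraph.double H).signedChromaticNumber = 2 * sInf {n : ℕ | H.Colorable n} - 1 := by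
  have hχ : H.Colorable (sInf {n : ℕ | H.Colorable n}) :=
    Nat.sInf_mem (s := {n | H.Colorable n}) ⟨_, H.colorable_of_fintype⟩
  have hupper := SignedGraph.exists_isColoring_double_of_colorable hχ
  refine le_antisymm (Nat.sInf_le hupper) (le_csInf ⟨_, hupper⟩ ?_)
  rintro k ⟨φ, hφ, hk⟩
  have hχ_le := Nat.sInf_le (s := {n | H.Colorable n})
    (SignedGraph.colorable_of_isColoring_double hφ hk)
  omega
end

section
/- Let (G,L) be an uncolorable pair. Then |L(v)| = d_G(v) for every vertex v ∈ V(G). -/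
open scoped Classical

/-! If `|L(v₀)| > d(v₀)` for some vertex `v₀`, color greedily in order of decreasing distance
from `v₀`: when a vertex other than `v₀` is colored, its neighbour on a shortest path to `v₀` is
still uncolored, so at most `d(v) - 1 ≤ |L(v)| - 1` colors are forbidden; at `v₀` at most
`d(v₀) < |L(v₀)|` are. -/

theorem SimpleGraph.Reachable.exists_adj_dist_lt {W : Type*} {H : SimpleGraph W} {u v : W}
    (huv : H.Reachable u v) (hne : u ≠ v) : ∃ w, H.Adj u w ∧ H.dist w v < H.dist u v := by
  obtain ⟨p, hp⟩ := huv.exists_walk_length_eq_dist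
  cases p with
  | nil => exact absurd rfl hne
  | @cons _ w _ hadj q =>
    refine ⟨w, hadj, ?_⟩
    have := SimpleGraph.dist_le q
    rw [← hp, SimpleGraph.Walk.length_cons]
    omega

namespace SignedGraph

variable {G : SignedGraph}

lemma sign_mul_self (e : G.E) : G.sign e * G.sign e = 1 := by
  rcases G.sign_unit e with h | h <;> simp [h]

lemma ne_of_ends_eq {e : G.E} {u w : G.V} (h : G.ends e = s(u, w)) : u ≠ w := by
  rintro rfl
  exact G.loopless e (by rw [h]; exact Sym2.mk_isDiag_iff.mpr rfl)

lemma eq_of_ends_eq_of_ends_eq {e : G.E} {u w w' : G.V} (h : G.ends e = s(u, w))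
    (h' : G.ends e = s(u, w')) : w = w' := by
  rcases Sym2.eq_iff.mp (h.symm.trans h') with ⟨-, rfl⟩ | ⟨-, hwu⟩
  · rfl
  · exact absurd hwu.symm (ne_of_ends_eq h)

def edgesTo (G : SignedGraph) (u : G.V) (S : Finset G.V) : Finset (G.E × G.V) :=
  (Finset.univ ×ˢ S).filter fun p => G.ends p.1 = s(u, p.2)

lemma mem_edgesTo {u : G.V} {S : Finset G.V} {p : G.E × G.V} :
    p ∈ G.edgesTo u S ↔ p.2 ∈ S ∧ G.ends p.1 = s(u, p.2) := by
  simp [edgesTo]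

lemma edgesTo_mono {u : G.V} {S T : Finset G.V} (hST : S ⊆ T) : G.edgesTo u S ⊆ G.edgesTo u T :=
  fun _ hp => mem_edgesTo.mpr ⟨hST (mem_edgesTo.mp hp).1, (mem_edgesTo.mp hp).2⟩

lemma card_edgesTo_le {u : G.V} {S : Finset G.V} {F : Finset G.E}
    (hF : ∀ e, ∀ w ∈ S, G.ends e = s(u, w) → e ∈ F) : (G.edgesTo u S).card ≤ F.card := by
  refine Finset.card_le_card_of_injOn Prod.fst (fun p hp => ?_) fun p hp q hq hpq => ?_
  · exact hF p.1 p.2 (mem_edgesTo.mp hp).1 (mem_edgesTo.mp hp).2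
  · have hp' := (mem_edgesTo.mp hp).2
    have hq' := (mem_edgesTo.mp hq).2
    rw [show p.1 = q.1 from hpq] at hp'
    exact Prod.ext hpq (eq_of_ends_eq_of_ends_eq hp' hq')

lemma card_edgesTo_le_degree (u : G.V) (S : Finset G.V) : (G.edgesTo u S).card ≤ G.degree u :=
  card_edgesTo_le fun e w _ h => Finset.mem_filter.mpr ⟨Finset.mem_univ e, h ▸ Sym2.mem_mk_left u w⟩

lemma card_edgesTo_lt_degree {u w : G.V} {S : Finset G.V} {e : G.E} (he : G.ends e = s(u, w))
    (hw : w ∉ S) : (G.edgesTo u S).card < G.degree u := by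
  have heI : e ∈ Finset.univ.filter (fun e : G.E => u ∈ G.ends e) :=
    Finset.mem_filter.mpr ⟨Finset.mem_univ e, he ▸ Sym2.mem_mk_left u w⟩
  refine (card_edgesTo_le fun f w' hw' hf => Finset.mem_erase.mpr ⟨?_, ?_⟩).trans_lt
    (Finset.card_erase_lt_of_mem heI)
  · rintro rfl
    exact hw (eq_of_ends_eq_of_ends_eq he hf ▸ hw')
  · exact Finset.mem_filter.mpr ⟨Finset.mem_univ f, hf ▸ Sym2.mem_mk_left u w'⟩

def IsListColoringOn (G : SignedGraph) (L : G.V → Finset ℤ) (S : Finset G.V) (φ : G.V → ℤ) :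
    Prop :=
  (∀ v ∈ S, φ v ∈ L v) ∧
    ∀ (e : G.E) (v w : G.V), G.ends e = s(v, w) → v ∈ S → w ∈ S → φ v ≠ G.sign e * φ w

/-- Each edge from `u` into `S` forbids one color at `u`, so fewer such edges than colors
leave a free color. -/
lemma IsListColoringOn.exists_update {L : G.V → Finset ℤ} {S : Finset G.V} {φ : G.V → ℤ}
    (hφ : G.IsListColoringOn L S φ) {u : G.V} (hu : (G.edgesTo u S).card < (L u).card) :
    ∃ c, G.IsListColoringOn L (insert u S) (Function.update φ u c) := by
  set F := (G.edgesTo u S).image fun p => G.sign p.1 * φ p.2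
  obtain ⟨c, hcL, hcF⟩ : ∃ c ∈ L u, c ∉ F :=
    Finset.exists_mem_notMem_of_card_lt_card (Finset.card_image_le.trans_lt hu)
  have hfree : ∀ e, ∀ w ∈ S, G.ends e = s(u, w) → c ≠ G.sign e * φ w := fun e w hw he hc =>
    hcF (Finset.mem_image.mpr ⟨(e, w), mem_edgesTo.mpr ⟨hw, he⟩, hc.symm⟩)
  refine ⟨c, fun v hv => ?_, fun e v w he hv hw => ?_⟩
  · rcases eq_or_ne v u with rfl | hvu
    · simpa using hcL
    · simpa [hvu] using hφ.1 v ((Finset.mem_insert.mp hv).resolve_left hvu)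
  have hvw := ne_of_ends_eq he
  rcases eq_or_ne v u with rfl | hvu
  · rw [Function.update_self, Function.update_of_ne hvw.symm]
    exact hfree e w ((Finset.mem_insert.mp hw).resolve_left hvw.symm) he
  rcases eq_or_ne w u with rfl | hwu
  · rw [Function.update_self, Function.update_of_ne hvw]
    intro hc
    refine hfree e v ((Finset.mem_insert.mp hv).resolve_left hvw) (he.trans Sym2.eq_swap) ?_
    rw [hc, ← mul_assoc, sign_mul_self, one_mul]
  · rw [Function.update_of_ne hvu, Function.update_of_ne hwu]
    exact hφ.2 e v w he ((Finset.mem_insert.mp hv).resolve_left hvu)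
      ((Finset.mem_insert.mp hw).resolve_left hwu)

/-- Greedy coloring: peel off, from every nonempty vertex set, a vertex with fewer edges into
the set than colors, and color the vertices in the reverse order. -/
theorem listColorable_of_forall_exists_card_edgesTo_lt {L : G.V → Finset ℤ}
    (h : ∀ S : Finset G.V, S.Nonempty → ∃ u ∈ S, (G.edgesTo u S).card < (L u).card) :
    G.ListColorable L := by
  suffices hS : ∀ S : Finset G.V, ∃ φ, G.IsListColoringOn L S φ by
    obtain ⟨φ, hφL, hφ⟩ := hS Finset.univ
    exact ⟨φ, fun e v w he => hφ e v w he (Finset.mem_univ v) (Finset.mem_univ w),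
      fun v => hφL v (Finset.mem_univ v)⟩
  intro S
  induction S using Finset.strongInduction with
  | H S ih =>
    rcases S.eq_empty_or_nonempty with rfl | hne
    · exact ⟨0, by simp [IsListColoringOn]⟩
    obtain ⟨u, huS, hu⟩ := h S hne
    obtain ⟨φ, hφ⟩ := ih (S.erase u) (Finset.erase_ssubset huS)
    obtain ⟨c, hc⟩ := hφ.exists_update
      ((Finset.card_le_card (edgesTo_mono (Finset.erase_subset u S))).trans_lt hu)
    exact ⟨_, Finset.insert_erase huS ▸ hc⟩

theorem listColorable_of_degree_lt (hG : G.Connected) {L : G.V → Finset ℤ}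
    (hL : ∀ v, G.degree v ≤ (L v).card) {v₀ : G.V} (hv₀ : G.degree v₀ < (L v₀).card) :
    G.ListColorable L := by
  refine listColorable_of_forall_exists_card_edgesTo_lt fun S hS => ?_
  obtain ⟨u, huS, hmin⟩ := S.exists_min_image (G.adjGraph.dist · v₀) hS
  refine ⟨u, huS, ?_⟩
  rcases eq_or_ne u v₀ with rfl | hne
  · exact (card_edgesTo_le_degree u S).trans_lt hv₀
  obtain ⟨w, ⟨e, he⟩, hw⟩ := (hG.preconnected u v₀).exists_adj_dist_lt hne
  exact (card_edgesTo_lt_degree he fun hwS => (hmin w hwS).not_gt hw).trans_le (hL u)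

end SignedGraph

/-- In an uncolorable pair `(G,L)`, `|L(v)| = d_G(v)` for every vertex. -/
theorem uncolorablePair_card_eq_degree (G : SignedGraph) (L : G.V → Finset ℤ)
    (h : G.UncolorablePair L) :
    ∀ v : G.V, (L v).card = G.degree v := by
  obtain ⟨hG, hL, hunc⟩ := h
  intro v
  refine le_antisymm (not_lt.mp fun hv => hunc ?_) (hL v)
  exact SignedGraph.listColorable_of_degree_lt hG hL hv
end

section
/- Let (G₁,L₁) and (G₂,L₂) be uncolorable pairs such that G₁ and G₂ have exactly one vertex v in common and no edges in common, let G = G₁ ∪ G₂, and let L be the list-assignment of G with L(u) = L_i(u) for u ∈ V(G_i) \ {v} (i = 1,2) and L(v) = L₁(v) ∪ L₂(v). If L₁(v) ∩ L₂(v) = ∅, then (G,L) is an uncolorable pair. -/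
open scoped Classical

/-!
A coloring of `G` from `L` restricts to a coloring of each `Gᵢ`, and its color at `v` lies in
`L₁ v` or in `L₂ v`; so it would be an `Lᵢ`-coloring of `Gᵢ` for some `i`, which does not exist.
The degree condition holds because degrees add up at the cut vertex `v`, and so do the list
sizes, the two lists at `v` being disjoint; away from `v` both the degree and the list are
those of the unique `Gᵢ` containing the vertex.
-/

namespace SignedGraph

namespace Subgraph

variable {G : SignedGraph} (H : G.Subgraph)

theorem toSG_ends_map_val (e : H.edges) : (H.toSG.ends e).map Subtype.val = G.ends e.1 := by
  simp only [toSG, Sym2.map_mk]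
  exact Quot.out_eq _

theorem ends_eq_of_toSG_ends_eq {e : H.edges} {a b : H.verts} (h : H.toSG.ends e = s(a, b)) :
    G.ends e.1 = s(a.1, b.1) := by
  rw [← toSG_ends_map_val, h, Sym2.map_mk]

theorem mem_toSG_ends_iff (e : H.edges) (u : H.verts) :
    u ∈ H.toSG.ends e ↔ u.1 ∈ G.ends e.1 := by
  rw [← toSG_ends_map_val]
  refine ⟨fun h => Sym2.mem_map.mpr ⟨u, h, rfl⟩, fun h => ?_⟩
  obtain ⟨w, hw, hwu⟩ := Sym2.mem_map.mp h
  exact Subtype.ext hwu ▸ hw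

theorem toSG_degree (u : H.verts) : H.toSG.degree u = H.degree u.1 := by
  refine Finset.card_nbij Subtype.val ?_ Subtype.val_injective.injOn ?_
  · intro e he
    simp only [Finset.coe_filter, Finset.mem_univ, true_and, Set.mem_ofPred_eq] at he ⊢
    exact ⟨e.2, (H.mem_toSG_ends_iff e u).mp he⟩
  · intro e he
    simp only [Finset.coe_filter, Finset.mem_univ, true_and, Set.mem_ofPred_eq] at he
    refine ⟨⟨e, he.1⟩, ?_, rfl⟩
    simp only [Finset.coe_filter, Finset.mem_univ, true_and]
    exact (H.mem_toSG_ends_iff _ u).mpr he.2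

theorem degree_eq_zero_of_notMem {u : G.V} (hu : u ∉ H.verts) : H.degree u = 0 :=
  Finset.card_eq_zero.mpr <| Finset.filter_eq_empty_iff.mpr fun e _ he =>
    hu (H.ends_mem e he.1 u he.2)

theorem degree_le_card_of_uncolorablePair {L : G.V → Finset ℤ}
    (h : H.toSG.UncolorablePair (fun u => L u.1)) {u : G.V} (hu : u ∈ H.verts) :
    H.degree u ≤ (L u).card :=
  H.toSG_degree ⟨u, hu⟩ ▸ h.2.1 ⟨u, hu⟩

def adjGraphHom : H.toSG.adjGraph →g G.adjGraph where
  toFun := Subtype.val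
  map_rel' := fun ⟨e, he⟩ => ⟨e.1, H.ends_eq_of_toSG_ends_eq he⟩

theorem reachable_of_toSG_connected (h : H.toSG.Connected) {u w : G.V}
    (hu : u ∈ H.verts) (hw : w ∈ H.verts) : G.adjGraph.Reachable u w :=
  (h.preconnected ⟨u, hu⟩ ⟨w, hw⟩).map H.adjGraphHom

theorem toSG_listColorable_of_isColoring {φ : G.V → ℤ} (hφ : G.IsColoring φ)
    {L : G.V → Finset ℤ} (hL : ∀ u ∈ H.verts, φ u ∈ L u) :
    H.toSG.ListColorable (fun u => L u.1) :=
  ⟨fun u => φ u.1, fun _ _ _ he => hφ _ _ _ (H.ends_eq_of_toSG_ends_eq he), fun u => hL u.1 u.2⟩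

end Subgraph

variable {G : SignedGraph}

theorem connected_of_connected_subgraphs {H₁ H₂ : G.Subgraph} (h₁ : H₁.toSG.Connected)
    (h₂ : H₂.toSG.Connected) {v : G.V} (hv₁ : v ∈ H₁.verts) (hv₂ : v ∈ H₂.verts)
    (hcover : H₁.verts ∪ H₂.verts = Set.univ) : G.Connected := by
  have reach (u : G.V) : G.adjGraph.Reachable u v := by
    rcases hcover.symm ▸ Set.mem_univ u with hu | hu
    exacts [H₁.reachable_of_toSG_connected h₁ hu hv₁, H₂.reachable_of_toSG_connected h₂ hu hv₂]
  exact (SimpleGraph.connected_iff _).mpr ⟨fun a b => (reach a).trans (reach b).symm, ⟨v⟩⟩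

theorem degree_eq_add_of_edges_partition {H₁ H₂ : G.Subgraph}
    (hdisj : H₁.edges ∩ H₂.edges = ∅) (hcover : H₁.edges ∪ H₂.edges = Set.univ) (u : G.V) :
    G.degree u = H₁.degree u + H₂.degree u := by
  have h₂ (e : G.E) : e ∈ H₂.edges ↔ e ∉ H₁.edges := by
    constructor
    · exact fun he₂ he₁ => (Set.eq_empty_iff_forall_notMem.mp hdisj) e ⟨he₁, he₂⟩
    · exact (hcover.symm ▸ Set.mem_univ e).resolve_left
  unfold degree Subgraph.degree
  simp only [h₂]
  rw [← Finset.card_filter_add_card_filter_not (s := Finset.univ.filter (u ∈ G.ends ·))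
    (· ∈ H₁.edges)]
  simp only [Finset.filter_filter, and_comm]

end SignedGraph

/-- Merging two uncolorable pairs at a common vertex with
disjoint lists yields an uncolorable pair. -/
theorem uncolorablePair_union (G : SignedGraph) (G₁ G₂ : G.Subgraph) (v : G.V)
    (hV : G₁.verts ∩ G₂.verts = {v}) (hVu : G₁.verts ∪ G₂.verts = Set.univ)
    (hE : G₁.edges ∩ G₂.edges = ∅) (hEu : G₁.edges ∪ G₂.edges = Set.univ)
    (L₁ L₂ L : G.V → Finset ℤ)
    (h1 : G₁.toSG.UncolorablePair (fun u => L₁ u.1))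
    (h2 : G₂.toSG.UncolorablePair (fun u => L₂ u.1))
    (hL1 : ∀ u ∈ G₁.verts, u ≠ v → L u = L₁ u)
    (hL2 : ∀ u ∈ G₂.verts, u ≠ v → L u = L₂ u)
    (hLv : L v = L₁ v ∪ L₂ v)
    (hdisj : L₁ v ∩ L₂ v = ∅) :
    G.UncolorablePair L := by
  obtain ⟨hv₁, hv₂⟩ : v ∈ G₁.verts ∩ G₂.verts := hV ▸ rfl
  refine ⟨SignedGraph.connected_of_connected_subgraphs h1.1 h2.1 hv₁ hv₂ hVu, fun u => ?_, ?_⟩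
  · rw [SignedGraph.degree_eq_add_of_edges_partition hE hEu]
    rcases eq_or_ne u v with rfl | huv
    · rw [hLv, Finset.card_union_of_disjoint (Finset.disjoint_iff_inter_eq_empty.mpr hdisj)]
      exact add_le_add (G₁.degree_le_card_of_uncolorablePair h1 hv₁)
        (G₂.degree_le_card_of_uncolorablePair h2 hv₂)
    have hnot (hu₁ : u ∈ G₁.verts) (hu₂ : u ∈ G₂.verts) : False := huv (hV.subset ⟨hu₁, hu₂⟩)
    rcases hVu.symm ▸ Set.mem_univ u with hu | hu
    · rw [G₂.degree_eq_zero_of_notMem (hnot hu), add_zero, hL1 u hu huv]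
      exact G₁.degree_le_card_of_uncolorablePair h1 hu
    · rw [G₁.degree_eq_zero_of_notMem (hnot · hu), zero_add, hL2 u hu huv]
      exact G₂.degree_le_card_of_uncolorablePair h2 hu
  · rintro ⟨φ, hφ, hφL⟩
    have restrict (H : G.Subgraph) (L' : G.V → Finset ℤ) (hL : ∀ u ∈ H.verts, u ≠ v → L u = L' u)
        (hv : φ v ∈ L' v) : H.toSG.ListColorable (fun u => L' u.1) :=
      H.toSG_listColorable_of_isColoring hφ fun u hu => by
        rcases eq_or_ne u v with rfl | huv
        exacts [hv, hL u hu huv ▸ hφL u]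
    rcases Finset.mem_union.mp (hLv ▸ hφL v) with hv | hv
    exacts [h1.2.2 (restrict G₁ L₁ hL1 hv), h2.2.2 (restrict G₂ L₂ hL2 hv)]
end
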